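/- arXiv:1908.02456 — 5 statements merged into one kernel-verified Lean document; each statement's English description precedes it below -/
import Mathlib

section
/- Let $n_I, n_\Gamma, n_{II}$ be positive integers. Let $H_{I,I}$ be a Hermitian $n_I \times n_I$ complex matrix, let $E$ be an $n_\Gamma \times n_I$ matrix with real entries (regarded as a complex matrix), let $H_{II,II}$ be a Hermitian $n_{II} \times n_{II}$ complex matrix, let $H_{II,\Gamma}$ be an $n_{II} \times n_\Gamma$ complex matrix, and let $s_0 > 0$ be a real number. Then $H_{II,II} - i s_0 I$ is invertible, and setting $M = K(s_0) = -H_{II,\Gamma}^* (H_{II,II} - i s_0 I)^{-1} H_{II,\Gamma}$, every differentiable function $\phi : \mathbb{R} \to \mathbb{C}^{n_I}$ satisfying $\phi'(t) = -i H_{I,I} \phi(t) - i E^T M E \phi(t)$ for all $t \ge 0$ has the property that $t \mapsto \|\phi(t)\|^2$ is monotone non-increasing on $[0,\infty)$ (stability of the zeroth-order absorbing boundary condition). -/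
open Matrix

lemma herm_quad_im {n : ℕ} {A : Matrix (Fin n) (Fin n) ℂ} (hA : A.IsHermitian)
    (x : Fin n → ℂ) : (star x ⬝ᵥ A.mulVec x).im = 0 := by
  rw [← Complex.conj_eq_iff_im]
  have : (starRingEnd ℂ) (star x ⬝ᵥ A *ᵥ x) = star (star x ⬝ᵥ A *ᵥ x) := rfl
  rw [this, ← star_dotProduct_star, star_star, star_mulVec, ← dotProduct_mulVec, hA.eq]

lemma dot_self_eq {n : ℕ} (v : Fin n → ℂ) :
    star v ⬝ᵥ v = ((∑ i, Complex.normSq (v i) : ℝ) : ℂ) := by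
  push_cast
  simp [dotProduct, Complex.normSq_eq_conj_mul_self]

lemma key_inv {n : ℕ} {A : Matrix (Fin n) (Fin n) ℂ} (hA : A.IsHermitian) {s0 : ℝ}
    (hs0 : 0 < s0) : IsUnit (A - (Complex.I * (s0 : ℂ)) • (1 : Matrix (Fin n) (Fin n) ℂ)) := by
  rw [← Matrix.mulVec_injective_iff_isUnit]
  have h0 : ∀ v : Fin n → ℂ,
      (A - (Complex.I * (s0 : ℂ)) • (1 : Matrix (Fin n) (Fin n) ℂ)) *ᵥ v = 0 → v = 0 := by
    intro v hv
    have h1 : star v ⬝ᵥ ((A - (Complex.I * (s0 : ℂ)) • (1 : Matrix (Fin n) (Fin n) ℂ)) *ᵥ v) = 0 := by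
      rw [hv, dotProduct_zero]
    have h2 : star v ⬝ᵥ ((A - (Complex.I * (s0 : ℂ)) • (1 : Matrix (Fin n) (Fin n) ℂ)) *ᵥ v)
        = star v ⬝ᵥ (A *ᵥ v) - (Complex.I * (s0 : ℂ)) * (star v ⬝ᵥ v) := by
      rw [Matrix.sub_mulVec, dotProduct_sub, Matrix.smul_mulVec, Matrix.one_mulVec,
        dotProduct_smul, smul_eq_mul]
    have h3 := h1
    rw [h2, sub_eq_zero] at h3
    have h4 := congrArg Complex.im h3
    rw [herm_quad_im hA, dot_self_eq] at h4
    simp [Complex.mul_im, Complex.mul_re] at h4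
    have hsum : ∑ i, Complex.normSq (v i) = 0 := by
      rcases h4 with h | h
      · exact absurd h (ne_of_gt hs0)
      · exact h
    funext i
    have := (Finset.sum_eq_zero_iff_of_nonneg (fun i _ => Complex.normSq_nonneg (v i))).mp hsum i
      (Finset.mem_univ i)
    exact Complex.normSq_eq_zero.mp this
  intro x y hxy
  have : (A - (Complex.I * (s0 : ℂ)) • (1 : Matrix (Fin n) (Fin n) ℂ)) *ᵥ (x - y) = 0 := by
    rw [Matrix.mulVec_sub, hxy, sub_self]
  exact sub_eq_zero.mp (h0 _ this)

lemma key_M {nΓ nII : ℕ} {H2 : Matrix (Fin nII) (Fin nII) ℂ} (hH2 : H2.IsHermitian)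
    (C : Matrix (Fin nII) (Fin nΓ) ℂ) {s0 : ℝ} (hs0 : 0 < s0) (ψ : Fin nΓ → ℂ) :
    (star ψ ⬝ᵥ (-(Cᴴ * (H2 - (Complex.I * (s0 : ℂ)) • (1 : Matrix (Fin nII) (Fin nII) ℂ))⁻¹ * C)) *ᵥ ψ).im ≤ 0 := by
  set A := H2 - (Complex.I * (s0 : ℂ)) • (1 : Matrix (Fin nII) (Fin nII) ℂ) with hAdef
  have hU : IsUnit A := key_inv hH2 hs0
  set u := A⁻¹ *ᵥ (C *ᵥ ψ) with hudef
  have hw : A *ᵥ u = C *ᵥ ψ := by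
    rw [hudef, Matrix.mulVec_mulVec, Matrix.mul_nonsing_inv _ ((Matrix.isUnit_iff_isUnit_det A).mp hU),
      Matrix.one_mulVec]
  have hAH : Aᴴ = H2 + (Complex.I * (s0 : ℂ)) • (1 : Matrix (Fin nII) (Fin nII) ℂ) := by
    rw [hAdef, conjTranspose_sub, hH2.eq, conjTranspose_smul, conjTranspose_one]
    have : star (Complex.I * (s0 : ℂ)) = -(Complex.I * (s0 : ℂ)) := by
      simp [Complex.ext_iff]
    rw [this, neg_smul, sub_neg_eq_add]
  have hz : star ψ ⬝ᵥ (-(Cᴴ * A⁻¹ * C)) *ᵥ ψ = -(star u ⬝ᵥ Aᴴ *ᵥ u) := by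
    rw [Matrix.neg_mulVec, dotProduct_neg, neg_inj, ← Matrix.mulVec_mulVec,
      ← Matrix.mulVec_mulVec, ← hudef]
    rw [Matrix.dotProduct_mulVec, ← star_mulVec, ← hw, star_mulVec, ← Matrix.dotProduct_mulVec]
  rw [hz, hAH]
  have hsplit : star u ⬝ᵥ (H2 + (Complex.I * (s0 : ℂ)) • (1 : Matrix (Fin nII) (Fin nII) ℂ)) *ᵥ u
      = star u ⬝ᵥ (H2 *ᵥ u) + (Complex.I * (s0 : ℂ)) * (star u ⬝ᵥ u) := by
    rw [Matrix.add_mulVec, dotProduct_add, Matrix.smul_mulVec, Matrix.one_mulVec,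
      dotProduct_smul, smul_eq_mul]
  rw [hsplit]
  have h1 := herm_quad_im hH2 u
  rw [dot_self_eq]
  simp [Complex.add_im, h1, Complex.mul_im, Complex.mul_re]
  exact mul_nonneg hs0.le (Finset.sum_nonneg fun i _ => Complex.normSq_nonneg _)

/-- Stability of the zeroth-order absorbing boundary condition: for `s₀ > 0`
the matrix `H_{II,II} - i s₀ I` is invertible, and with
`M = K(s₀) = -H_{II,Γ}ᴴ (H_{II,II} - i s₀ I)⁻¹ H_{II,Γ}`, every solution of
`φ' = -i H_{I,I} φ - i Eᵀ M E φ` has non-increasing squared norm on `[0, ∞)`. -/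
theorem zeroth_order_abc_stability
    (nI nΓ nII : ℕ) (hnI : 0 < nI) (hnΓ : 0 < nΓ) (hnII : 0 < nII)
    (HII : Matrix (Fin nI) (Fin nI) ℂ) (hHII : HII.IsHermitian)
    (E : Matrix (Fin nΓ) (Fin nI) ℂ) (hE : ∀ i j, (E i j).im = 0)
    (H2 : Matrix (Fin nII) (Fin nII) ℂ) (hH2 : H2.IsHermitian)
    (C : Matrix (Fin nII) (Fin nΓ) ℂ)
    (s0 : ℝ) (hs0 : 0 < s0) :
    IsUnit (H2 - (Complex.I * (s0 : ℂ)) • (1 : Matrix (Fin nII) (Fin nII) ℂ)) ∧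
    ∀ M : Matrix (Fin nΓ) (Fin nΓ) ℂ,
      M = -(Cᴴ * (H2 - (Complex.I * (s0 : ℂ)) • (1 : Matrix (Fin nII) (Fin nII) ℂ))⁻¹ * C) →
      ∀ φ : ℝ → EuclideanSpace ℂ (Fin nI),
        (∀ t : ℝ, 0 ≤ t → HasDerivAt φ
          ((WithLp.toLp 2 ((-Complex.I) • (HII.mulVec (φ t)) +
            (-Complex.I) • ((Eᵀ * M * E).mulVec (φ t))) : EuclideanSpace ℂ (Fin nI))) t) →
        AntitoneOn (fun t : ℝ => ‖φ t‖ ^ 2) (Set.Ici (0 : ℝ)) := by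
  refine ⟨key_inv hH2 hs0, ?_⟩
  intro M hM φ hφ
  -- inner product as dot product
  have hinner : ∀ x y : EuclideanSpace ℂ (Fin nI),
      (inner ℂ x y : ℂ) = star x ⬝ᵥ y := by
    intro x y
    simp [PiLp.inner_apply, dotProduct, RCLike.inner_apply, mul_comm]
  -- E has real entries, so Eᴴ = Eᵀ
  have hET : Eᴴ = Eᵀ := by
    ext i j
    simp only [conjTranspose_apply, transpose_apply, Complex.star_def]
    exact Complex.conj_eq_iff_im.mpr (hE j i)
  -- the quadratic form bound
  have hMψ : ∀ ψ : Fin nΓ → ℂ, (star ψ ⬝ᵥ M *ᵥ ψ).im ≤ 0 := by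
    intro ψ; rw [hM]; exact key_M hH2 C hs0 ψ
  -- the key real-part estimate
  have hre : ∀ x : EuclideanSpace ℂ (Fin nI),
      (inner ℂ x ((WithLp.toLp 2 ((-Complex.I) • (HII.mulVec x) +
        (-Complex.I) • ((Eᵀ * M * E).mulVec x)) : EuclideanSpace ℂ (Fin nI))) : ℂ).re ≤ 0 := by
    intro x
    rw [hinner]
    have hdot : star x ⬝ᵥ ((WithLp.toLp 2 ((-Complex.I) • (HII.mulVec x) +
        (-Complex.I) • ((Eᵀ * M * E).mulVec x)) : EuclideanSpace ℂ (Fin nI)))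
        = (-Complex.I) * (star x ⬝ᵥ HII *ᵥ x + star x ⬝ᵥ (Eᵀ * M * E) *ᵥ x) := by
      show star x ⬝ᵥ ((-Complex.I) • (HII *ᵥ x) + (-Complex.I) • ((Eᵀ * M * E) *ᵥ x)) = _
      rw [dotProduct_add, dotProduct_smul, dotProduct_smul, smul_eq_mul, smul_eq_mul, mul_add]
    rw [hdot]
    have hq2 : star x ⬝ᵥ (Eᵀ * M * E) *ᵥ x = star (E *ᵥ x) ⬝ᵥ M *ᵥ (E *ᵥ x) := by
      rw [← Matrix.mulVec_mulVec, ← Matrix.mulVec_mulVec, Matrix.dotProduct_mulVec (star x) Eᵀ,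
        ← hET, ← star_mulVec, Matrix.mulVec_mulVec, Matrix.dotProduct_mulVec, star_mulVec,
        ← Matrix.dotProduct_mulVec, ← Matrix.mulVec_mulVec]
    rw [hq2]
    have h1 := herm_quad_im hHII x
    have h2 := hMψ (E *ᵥ x)
    simp only [Complex.mul_re, Complex.neg_re, Complex.I_re, Complex.neg_im, Complex.I_im,
      Complex.add_im, Complex.add_re, h1]
    simp only [neg_zero, zero_mul, zero_add, zero_sub, neg_mul, one_mul, neg_neg]
    linarith
  -- now the monotonicity
  set v : ℝ → EuclideanSpace ℂ (Fin nI) := fun t =>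
    (WithLp.toLp 2 ((-Complex.I) • (HII.mulVec (φ t)) +
      (-Complex.I) • ((Eᵀ * M * E).mulVec (φ t))) : EuclideanSpace ℂ (Fin nI)) with hv
  have hφ' : ∀ t : ℝ, 0 ≤ t → HasDerivAt φ (v t) t := hφ
  set g : ℝ → ℝ := fun t => ‖φ t‖ ^ 2 with hg
  have hderiv : ∀ t : ℝ, 0 ≤ t → HasDerivAt g
      (Complex.re ((inner ℂ (φ t) (v t) : ℂ) + (inner ℂ (v t) (φ t) : ℂ))) t := by
    intro t ht
    have h1 := (hφ' t ht).inner ℂ (hφ' t ht)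
    have h2 := Complex.reCLM.hasFDerivAt.comp_hasDerivAt t h1
    have h2' : HasDerivAt (fun s => Complex.re (inner ℂ (φ s) (φ s) : ℂ))
        (Complex.re ((inner ℂ (φ t) (v t) : ℂ) + (inner ℂ (v t) (φ t) : ℂ))) t := by
      simpa only [Function.comp_def, Complex.reCLM_apply] using h2
    have hfun : (fun s : ℝ => Complex.re (inner ℂ (φ s) (φ s) : ℂ)) = g := by
      funext s
      have := inner_self_eq_norm_sq (𝕜 := ℂ) (φ s)
      simpa using this
    rw [hfun] at h2'
    exact h2'
  have hdnonpos : ∀ t : ℝ, 0 ≤ t →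
      Complex.re ((inner ℂ (φ t) (v t) : ℂ) + (inner ℂ (v t) (φ t) : ℂ)) ≤ 0 := by
    intro t ht
    rw [← inner_conj_symm (v t) (φ t), Complex.add_re, Complex.conj_re]
    have h5 : (inner ℂ (φ t) (v t) : ℂ).re ≤ 0 := hre (φ t)
    linarith
  apply antitoneOn_of_deriv_nonpos (convex_Ici 0)
  · intro t ht
    exact ((hderiv t ht).continuousAt).continuousWithinAt
  · intro t ht
    rw [interior_Ici] at ht
    exact ((hderiv t (le_of_lt ht)).differentiableAt).differentiableWithinAt
  · intro t ht
    rw [interior_Ici] at ht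
    rw [(hderiv t (le_of_lt ht)).deriv]
    exact hdnonpos t (le_of_lt ht)
end

section
/- Let $n_I, n_\Gamma$ be positive integers, let $H_{I,I}$ be a Hermitian $n_I \times n_I$ complex matrix, let $E$ be an $n_\Gamma \times n_I$ matrix with real entries (regarded as a complex matrix), and let $M$ be an $n_\Gamma \times n_\Gamma$ complex matrix such that the Hermitian matrix $i(M^* - M)$ is negative semidefinite. Then every differentiable function $\phi : \mathbb{R} \to \mathbb{C}^{n_I}$ satisfying $\phi'(t) = -i H_{I,I} \phi(t) - i E^T M E \phi(t)$ for all $t \ge 0$ has the property that $t \mapsto \|\phi(t)\|^2$ is monotone non-increasing on $[0,\infty)$. -/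
open Matrix

/-- A Hermitian complex matrix `S` is negative semidefinite: `v* S v ≤ 0` for every vector `v`
(the quantity is real since `S` is Hermitian, so we express it via the real part). -/
def Matrix.NegSemidefC {m : Type*} [Fintype m] (S : Matrix m m ℂ) : Prop :=
  S.IsHermitian ∧ ∀ v : m → ℂ, (star v ⬝ᵥ S.mulVec v).re ≤ 0

lemma conj_quad {n : Type*} [Fintype n] (A : Matrix n n ℂ) (v : n → ℂ) :
    (starRingEnd ℂ) (star v ⬝ᵥ A.mulVec v) = star v ⬝ᵥ Aᴴ.mulVec v := by
  have h1 : (starRingEnd ℂ) (star v ⬝ᵥ A.mulVec v) = star (A.mulVec v) ⬝ᵥ v := by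
    rw [Matrix.star_dotProduct]; simp
  rw [h1, Matrix.star_mulVec, Matrix.dotProduct_mulVec]

lemma key_quad (nI nΓ : ℕ)
    (HII : Matrix (Fin nI) (Fin nI) ℂ) (hHII : HII.IsHermitian)
    (E : Matrix (Fin nΓ) (Fin nI) ℂ) (hE : ∀ i j, (E i j).im = 0)
    (M : Matrix (Fin nΓ) (Fin nΓ) ℂ)
    (hM : (Complex.I • (Mᴴ - M)).NegSemidefC) (v : Fin nI → ℂ) :
    (star v ⬝ᵥ ((-Complex.I) • (HII.mulVec v) + (-Complex.I) • ((Eᵀ * M * E).mulVec v))).re ≤ 0 := by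
  set B := Eᵀ * M * E with hBdef
  set z₁ := star v ⬝ᵥ HII.mulVec v with hz₁
  set z₂ := star v ⬝ᵥ B.mulVec v with hz₂
  have hsplit : (star v ⬝ᵥ ((-Complex.I) • (HII.mulVec v) + (-Complex.I) • (B.mulVec v)))
      = (-Complex.I) * z₁ + (-Complex.I) * z₂ := by
    rw [dotProduct_add, dotProduct_smul, dotProduct_smul]
    simp [smul_eq_mul]
    rfl
  rw [hsplit]
  have him₁ : z₁.im = 0 := by
    have := conj_quad HII v
    rw [hHII.eq] at this
    rw [← hz₁] at this
    have : (starRingEnd ℂ) z₁ = z₁ := this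
    have h2 := congrArg Complex.im this
    simp at h2
    linarith
  -- E is real
  have hEH : Eᴴ = Eᵀ := by
    ext i j
    simp only [Matrix.conjTranspose_apply, Matrix.transpose_apply, RCLike.star_def]
    exact Complex.conj_eq_iff_im.mpr (hE _ _)
  have hETH : (Eᵀ)ᴴ = E := by
    ext i j
    simp only [Matrix.conjTranspose_apply, Matrix.transpose_apply, RCLike.star_def]
    exact Complex.conj_eq_iff_im.mpr (hE _ _)
  have hBH : Bᴴ = Eᵀ * Mᴴ * E := by
    rw [hBdef, Matrix.conjTranspose_mul, Matrix.conjTranspose_mul, hEH, hETH, Matrix.mul_assoc]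
  -- star vector transfer
  have hstarE : E.mulVec (star v) = star (E.mulVec v) := by
    funext i
    simp only [Pi.star_apply, Matrix.mulVec, dotProduct, RCLike.star_def, map_sum]
    refine Finset.sum_congr rfl fun j _ => ?_
    rw [_root_.map_mul, Complex.conj_eq_iff_im.mpr (hE i j)]
  have hquad_transfer : ∀ S : Matrix (Fin nΓ) (Fin nΓ) ℂ,
      star v ⬝ᵥ (Eᵀ * S * E).mulVec v = star (E.mulVec v) ⬝ᵥ S.mulVec (E.mulVec v) := by
    intro S
    rw [Matrix.mul_assoc, ← Matrix.mulVec_mulVec, Matrix.dotProduct_mulVec,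
      Matrix.vecMul_transpose, hstarE, ← Matrix.mulVec_mulVec]
  have him₂ : z₂.im ≤ 0 := by
    have hre : (Complex.I * ((starRingEnd ℂ) z₂ - z₂)).re = 2 * z₂.im := by
      simp [Complex.mul_re, Complex.sub_re, Complex.sub_im]; ring
    have hmat : Complex.I • (Bᴴ - B) = Eᵀ * (Complex.I • (Mᴴ - M)) * E := by
      rw [hBH, hBdef]
      rw [Matrix.mul_smul, Matrix.smul_mul, Matrix.mul_sub, Matrix.sub_mul]
    have hq : star v ⬝ᵥ (Complex.I • (Bᴴ - B)).mulVec v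
        = Complex.I * ((starRingEnd ℂ) z₂ - z₂) := by
      rw [Matrix.smul_mulVec, dotProduct_smul, Matrix.sub_mulVec,
        dotProduct_sub, ← hz₂, ← conj_quad]
      simp [smul_eq_mul]
      rfl
    have hle := hM.2 (E.mulVec v)
    rw [← hquad_transfer, ← hmat, hq] at hle
    rw [hre] at hle
    linarith
  have : ((-Complex.I) * z₁ + (-Complex.I) * z₂).re = z₁.im + z₂.im := by
    simp [Complex.mul_re]
  rw [this, him₁]
  linarith

/-- If the Hermitian matrix `i (Mᴴ - M)` is negative semidefinite, then every
solution of `φ' = -i H_{I,I} φ - i Eᵀ M E φ` has non-increasing squared norm on `[0, ∞)`. -/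
theorem zeroth_order_abc_stability_of_negSemidef
    (nI nΓ : ℕ) (hnI : 0 < nI) (hnΓ : 0 < nΓ)
    (HII : Matrix (Fin nI) (Fin nI) ℂ) (hHII : HII.IsHermitian)
    (E : Matrix (Fin nΓ) (Fin nI) ℂ) (hE : ∀ i j, (E i j).im = 0)
    (M : Matrix (Fin nΓ) (Fin nΓ) ℂ)
    (hM : (Complex.I • (Mᴴ - M)).NegSemidefC)
    (φ : ℝ → EuclideanSpace ℂ (Fin nI))
    (hφ : ∀ t : ℝ, 0 ≤ t → HasDerivAt φ
      ((WithLp.toLp 2 ((-Complex.I) • (HII.mulVec (φ t)) +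
        (-Complex.I) • ((Eᵀ * M * E).mulVec (φ t))) : EuclideanSpace ℂ (Fin nI))) t) :
    AntitoneOn (fun t : ℝ => ‖φ t‖ ^ 2) (Set.Ici (0 : ℝ)) := by
  set D : ℝ → EuclideanSpace ℂ (Fin nI) := fun t =>
    ((WithLp.toLp 2 ((-Complex.I) • (HII.mulVec (φ t)) +
      (-Complex.I) • ((Eᵀ * M * E).mulVec (φ t))) : EuclideanSpace ℂ (Fin nI))) with hD
  have hderiv : ∀ t : ℝ, 0 ≤ t → HasDerivAt (fun s => ‖φ s‖ ^ 2)
      ((inner ℂ (φ t) (D t) + inner ℂ (D t) (φ t) : ℂ)).re t := by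
    intro t ht
    have h1 : HasDerivAt (fun s => (inner ℂ (φ s) (φ s) : ℂ))
        ((inner ℂ (φ t) (D t) + inner ℂ (D t) (φ t) : ℂ)) t :=
      (hφ t ht).inner ℂ (hφ t ht)
    have h2 := Complex.reCLM.hasFDerivAt.comp_hasDerivAt t h1
    have heq : (fun s => ‖φ s‖ ^ 2) = fun s => (inner ℂ (φ s) (φ s) : ℂ).re :=
      funext fun s => (inner_self_eq_norm_sq (𝕜 := ℂ) (φ s)).symm
    rw [heq]
    exact h2
  have hnonpos : ∀ t : ℝ, 0 ≤ t →
      ((inner ℂ (φ t) (D t) + inner ℂ (D t) (φ t) : ℂ)).re ≤ 0 := by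
    intro t ht
    have hc : (inner ℂ (D t) (φ t) : ℂ) = (starRingEnd ℂ) (inner ℂ (φ t) (D t) : ℂ) :=
      (inner_conj_symm (𝕜 := ℂ) (D t) (φ t)).symm
    have hdp : (inner ℂ (φ t) (D t) : ℂ)
        = star ((φ t : Fin nI → ℂ)) ⬝ᵥ ((-Complex.I) • (HII.mulVec (φ t)) +
          (-Complex.I) • ((Eᵀ * M * E).mulVec (φ t))) := by
      rw [hD]
      simp [PiLp.inner_apply, dotProduct, RCLike.inner_apply]
      rw [← Finset.sum_neg_distrib, ← Finset.sum_neg_distrib, ← Finset.sum_add_distrib]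
      exact Finset.sum_congr rfl fun i _ => by ring
    have hk := key_quad nI nΓ HII hHII E hE M hM (φ t)
    rw [hc]
    have : ((inner ℂ (φ t) (D t) : ℂ) + (starRingEnd ℂ) (inner ℂ (φ t) (D t) : ℂ)).re
        = 2 * (inner ℂ (φ t) (D t) : ℂ).re := by
      simp only [Complex.add_re, Complex.conj_re]; ring
    rw [this, hdp]
    linarith
  apply antitoneOn_of_deriv_nonpos (convex_Ici 0)
  · intro t ht
    exact (hderiv t ht).continuousAt.continuousWithinAt
  · intro t ht
    rw [interior_Ici] at ht
    exact (hderiv t ht.le).differentiableAt.differentiableWithinAt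
  · intro t ht
    rw [interior_Ici] at ht
    rw [(hderiv t ht.le).deriv]
    exact hnonpos t ht.le
end

section
/- Let $H$ be a Hermitian $n \times n$ complex matrix, let $C$ be an $n \times m$ complex matrix, and let $s$ be a nonzero real number. Then $H - i s I$ is invertible, and setting $K = -C^* (H - i s I)^{-1} C$ and $P = (H - i s I)^{-1} C$, one has the identity $K^* - K = 2 i s\, P^* P$. In particular, if $s > 0$, then the Hermitian matrix $i(K^* - K) = -2 s\, P^* P$ is negative semidefinite, i.e., the Dirichlet-to-Neumann kernel $K(s)$ has negative semidefinite imaginary part. -/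
open Matrix

lemma dtn_dot_self (k : ℕ) (v : Fin k → ℂ) :
    star v ⬝ᵥ v = ((∑ i, Complex.normSq (v i) : ℝ) : ℂ) := by
  push_cast
  simp [dotProduct, Complex.normSq_eq_conj_mul_self, Complex.star_def]

theorem dtn_aux_isUnit (n : ℕ) (H : Matrix (Fin n) (Fin n) ℂ) (hH : H.IsHermitian)
    (s : ℝ) (hs : s ≠ 0) :
    IsUnit (H - (Complex.I * (s : ℂ)) • (1 : Matrix (Fin n) (Fin n) ℂ)) := by
  set A := H - (Complex.I * (s : ℂ)) • (1 : Matrix (Fin n) (Fin n) ℂ) with hA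
  rw [← Matrix.mulVec_injective_iff_isUnit]
  have key : ∀ v : Fin n → ℂ, A *ᵥ v = 0 → v = 0 := by
    intro v hv
    have h0 : star v ⬝ᵥ (A *ᵥ v) = 0 := by rw [hv, dotProduct_zero]
    have hexp : star v ⬝ᵥ (A *ᵥ v)
        = star v ⬝ᵥ (H *ᵥ v) - (Complex.I * (s : ℂ)) * (star v ⬝ᵥ v) := by
      simp [hA, sub_mulVec, smul_mulVec, dotProduct_sub, dotProduct_smul,
        smul_eq_mul, one_mulVec]
    have hreal : star (star v ⬝ᵥ (H *ᵥ v)) = star v ⬝ᵥ (H *ᵥ v) := by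
      rw [← star_dotProduct, star_mulVec, hH.eq, ← dotProduct_mulVec]
    have him : (star v ⬝ᵥ (H *ᵥ v)).im = 0 := by
      have h := congrArg Complex.im hreal
      simp [Complex.star_def] at h
      linarith
    have h1 : (0 : ℂ) = star v ⬝ᵥ (H *ᵥ v)
        - (Complex.I * (s : ℂ)) * ((∑ i, Complex.normSq (v i) : ℝ) : ℂ) := by
      rw [← h0, hexp, dtn_dot_self]
    have h2 := congrArg Complex.im h1
    simp [Complex.mul_im, him] at h2
    have hsum : ∑ i, Complex.normSq (v i) = 0 := by
      rcases h2 with h | h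
      · exact absurd h hs
      · exact h
    funext i
    have := (Finset.sum_eq_zero_iff_of_nonneg (fun i _ => Complex.normSq_nonneg (v i))).mp
      hsum i (Finset.mem_univ i)
    simpa using Complex.normSq_eq_zero.mp this
  intro u w h
  have h0 : A *ᵥ (u - w) = 0 := by rw [mulVec_sub, h, sub_self]
  exact sub_eq_zero.mp (key _ h0)

/-- For Hermitian `H` and real `s ≠ 0`, the matrix `H - isI` is invertible, and
with `K = -Cᴴ (H - isI)⁻¹ C` and `P = (H - isI)⁻¹ C` one has `Kᴴ - K = 2is PᴴP`; if `s > 0`,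
the Hermitian matrix `i (Kᴴ - K) = -2s PᴴP` is negative semidefinite. -/
theorem dtn_kernel_antihermitian_part
    (n m : ℕ)
    (H : Matrix (Fin n) (Fin n) ℂ) (hH : H.IsHermitian)
    (C : Matrix (Fin n) (Fin m) ℂ)
    (s : ℝ) (hs : s ≠ 0) :
    IsUnit (H - (Complex.I * (s : ℂ)) • (1 : Matrix (Fin n) (Fin n) ℂ)) ∧
    ∀ (K : Matrix (Fin m) (Fin m) ℂ) (P : Matrix (Fin n) (Fin m) ℂ),
      K = -(Cᴴ * (H - (Complex.I * (s : ℂ)) • (1 : Matrix (Fin n) (Fin n) ℂ))⁻¹ * C) →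
      P = (H - (Complex.I * (s : ℂ)) • (1 : Matrix (Fin n) (Fin n) ℂ))⁻¹ * C →
      Kᴴ - K = ((2 : ℂ) * Complex.I * (s : ℂ)) • (Pᴴ * P) ∧
      (0 < s →
        Complex.I • (Kᴴ - K) = (-(2 : ℂ) * (s : ℂ)) • (Pᴴ * P) ∧
        (Complex.I • (Kᴴ - K)).NegSemidefC) := by

  set A := H - (Complex.I * (s : ℂ)) • (1 : Matrix (Fin n) (Fin n) ℂ) with hA
  have hU : IsUnit A := dtn_aux_isUnit n H hH s hs
  refine ⟨hU, ?_⟩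
  intro K P hK hP
  have hAH : Aᴴ = A + ((2 : ℂ) * Complex.I * (s : ℂ)) • (1 : Matrix (Fin n) (Fin n) ℂ) := by
    have h1 : Aᴴ = H + (Complex.I * (s : ℂ)) • (1 : Matrix (Fin n) (Fin n) ℂ) := by
      rw [hA, conjTranspose_sub, hH.eq, conjTranspose_smul, conjTranspose_one]
      have : star (Complex.I * (s : ℂ)) = -(Complex.I * (s : ℂ)) := by
        simp [Complex.star_def]
      rw [this, neg_smul, sub_neg_eq_add]
    rw [h1, hA]
    module
  have hUH : IsUnit Aᴴ := by
    rw [Matrix.isUnit_iff_isUnit_det] at hU ⊢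
    rwa [det_conjTranspose, isUnit_iff_ne_zero, ne_eq, star_eq_zero, ← ne_eq,
      ← isUnit_iff_ne_zero]
  have hdet : IsUnit A.det := (Matrix.isUnit_iff_isUnit_det A).mp hU
  have hdetH : IsUnit Aᴴ.det := (Matrix.isUnit_iff_isUnit_det Aᴴ).mp hUH
  have hinvH : (A⁻¹)ᴴ = (Aᴴ)⁻¹ := Matrix.conjTranspose_nonsing_inv A
  have hdiff : A⁻¹ - (Aᴴ)⁻¹ = ((2 : ℂ) * Complex.I * (s : ℂ)) • ((Aᴴ)⁻¹ * A⁻¹) := by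
    have key : (Aᴴ)⁻¹ * (Aᴴ - A) * A⁻¹ = A⁻¹ - (Aᴴ)⁻¹ := by
      rw [Matrix.mul_sub, Matrix.sub_mul, Matrix.nonsing_inv_mul _ hdetH, Matrix.one_mul,
        Matrix.mul_assoc, Matrix.mul_nonsing_inv _ hdet, Matrix.mul_one]
    have hsub : Aᴴ - A = ((2 : ℂ) * Complex.I * (s : ℂ)) • (1 : Matrix (Fin n) (Fin n) ℂ) := by
      rw [hAH]; abel
    rw [← key, hsub]
    rw [Matrix.mul_smul, Matrix.mul_one, Matrix.smul_mul]
  have hmain : Kᴴ - K = ((2 : ℂ) * Complex.I * (s : ℂ)) • (Pᴴ * P) := by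
    rw [hK, hP]
    have lhs1 : (-(Cᴴ * A⁻¹ * C))ᴴ = -(Cᴴ * (Aᴴ)⁻¹ * C) := by
      simp [Matrix.conjTranspose_mul, hinvH, Matrix.mul_assoc]
    have lhs2 : Cᴴ * (A⁻¹ - (Aᴴ)⁻¹) * C = -(Cᴴ * (Aᴴ)⁻¹ * C) - -(Cᴴ * A⁻¹ * C) := by
      rw [Matrix.mul_sub, Matrix.sub_mul]
      abel
    rw [lhs1, ← lhs2, hdiff, Matrix.mul_smul, Matrix.smul_mul]
    congr 1
    rw [Matrix.conjTranspose_mul, hinvH]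
    rw [Matrix.mul_assoc, Matrix.mul_assoc, Matrix.mul_assoc]
  refine ⟨hmain, fun hspos => ?_⟩
  have hscal : Complex.I * ((2 : ℂ) * Complex.I * (s : ℂ)) = -(2 : ℂ) * (s : ℂ) := by
    have := Complex.I_mul_I
    linear_combination (2 * (s : ℂ)) * this
  have hsc : Complex.I • (Kᴴ - K) = (-(2 : ℂ) * (s : ℂ)) • (Pᴴ * P) := by
    rw [hmain, smul_smul, hscal]
  refine ⟨hsc, ?_, ?_⟩
  · -- Hermitian
    rw [hsc]
    show ((-(2 : ℂ) * (s : ℂ)) • (Pᴴ * P))ᴴ = _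
    rw [conjTranspose_smul, Matrix.conjTranspose_mul, conjTranspose_conjTranspose]
    congr 1
    simp [Complex.star_def, Complex.ext_iff]
  · intro v
    rw [hsc]
    have hstar : star (P *ᵥ v) = star v ᵥ* Pᴴ := star_mulVec P v
    have e1 : star v ⬝ᵥ ((-(2 : ℂ) * (s : ℂ)) • (Pᴴ * P)) *ᵥ v
        = (-(2 : ℂ) * (s : ℂ)) * (star (P *ᵥ v) ⬝ᵥ (P *ᵥ v)) := by
      rw [smul_mulVec, dotProduct_smul, smul_eq_mul, ← Matrix.mulVec_mulVec,
        dotProduct_mulVec, ← hstar]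
    rw [e1, dtn_dot_self]
    have hnn : 0 ≤ ∑ i, Complex.normSq ((P *ᵥ v) i) :=
      Finset.sum_nonneg fun i _ => Complex.normSq_nonneg _
    simp [Complex.mul_re]
    nlinarith
end

section
/- Let $H$ be a Hermitian $n \times n$ complex matrix, let $C$ be an $n \times m$ complex matrix whose associated linear map is injective (i.e., $Cv = 0$ implies $v = 0$), and let $s > 0$ be a real number. Then $H - i s I$ is invertible and the matrix $K(s) = -C^* (H - i s I)^{-1} C$ is invertible. -/
open Matrix

lemma dtn_aux {n : ℕ} (H : Matrix (Fin n) (Fin n) ℂ) (hH : H.IsHermitian)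
    (s : ℝ) (hs : s ≠ 0) (w : Fin n → ℂ)
    (h : star w ⬝ᵥ (H *ᵥ w) = Complex.I * (s : ℂ) * (star w ⬝ᵥ w)) : w = 0 := by
  set z := star w ⬝ᵥ (H *ᵥ w) with hz
  set t := star w ⬝ᵥ w with ht
  have hzstar : star z = z := by
    rw [hz, ← star_dotProduct_star, star_star, star_mulVec, hH.eq, ← dotProduct_mulVec]
  have htstar : star t = t := (star_dotProduct w w).symm
  have hzim : z.im = 0 := by
    have := congrArg Complex.im hzstar
    simp [Complex.star_def] at this
    linarith
  have htim : t.im = 0 := by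
    have := congrArg Complex.im htstar
    simp [Complex.star_def] at this
    linarith
  have htre : t.re = 0 := by
    have := congrArg Complex.im h
    simp [Complex.mul_im, Complex.mul_re, htim, hzim] at this
    rcases this with h1 | h1
    · exact absurd h1 hs
    · exact h1
  have ht0 : t = 0 := Complex.ext (by simp [htre]) (by simp [htim])
  open ComplexOrder in
  exact dotProduct_star_self_eq_zero.mp ht0

/-- For Hermitian `H`, injective coupling `C`, and `s > 0`, both `H - isI`
and the Dirichlet-to-Neumann kernel `K(s) = -Cᴴ (H - isI)⁻¹ C` are invertible. -/
theorem dtn_kernel_invertible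
    (n m : ℕ)
    (H : Matrix (Fin n) (Fin n) ℂ) (hH : H.IsHermitian)
    (C : Matrix (Fin n) (Fin m) ℂ) (hC : Function.Injective C.mulVec)
    (s : ℝ) (hs : 0 < s) :
    IsUnit (H - (Complex.I * (s : ℂ)) • (1 : Matrix (Fin n) (Fin n) ℂ)) ∧
    IsUnit (-(Cᴴ * (H - (Complex.I * (s : ℂ)) • (1 : Matrix (Fin n) (Fin n) ℂ))⁻¹ * C)) := by
  set A := H - (Complex.I * (s : ℂ)) • (1 : Matrix (Fin n) (Fin n) ℂ) with hA
  have hker : ∀ v : Fin n → ℂ, A *ᵥ v = 0 → v = 0 := by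
    intro v hv
    apply dtn_aux H hH s hs.ne' v
    rw [hA, sub_mulVec, smul_mulVec, one_mulVec, sub_eq_zero] at hv
    rw [hv, dotProduct_smul, smul_eq_mul]
  have hAunit : IsUnit A := by
    rw [← Matrix.mulVec_injective_iff_isUnit]
    intro x y hxy
    have h0 : A *ᵥ (x - y) = 0 := by rw [mulVec_sub, hxy, sub_self]
    exact sub_eq_zero.mp (hker _ h0)
  refine ⟨hAunit, ?_⟩
  rw [← Matrix.mulVec_injective_iff_isUnit]
  intro x y hxy
  have h0 : (-(Cᴴ * A⁻¹ * C)) *ᵥ (x - y) = 0 := by rw [mulVec_sub, hxy, sub_self]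
  suffices h : ∀ v : Fin m → ℂ, (-(Cᴴ * A⁻¹ * C)) *ᵥ v = 0 → v = 0 by
    exact sub_eq_zero.mp (h _ h0)
  intro v hv
  rw [neg_mulVec, neg_eq_zero] at hv
  set u := C *ᵥ v with hu
  set w := A⁻¹ *ᵥ u with hw
  have hCw : Cᴴ *ᵥ w = 0 := by
    rw [hw, hu, mulVec_mulVec, mulVec_mulVec]
    exact hv
  have huAw : A *ᵥ w = u := by
    rw [hw, mulVec_mulVec, Matrix.mul_nonsing_inv _ (hAunit.map (Matrix.detMonoidHom))
      , one_mulVec]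
  -- 0 = star v ⬝ᵥ (Cᴴ *ᵥ w) = star w ⬝ᵥ (Aᴴ *ᵥ w)
  have key : star w ⬝ᵥ (Aᴴ *ᵥ w) = 0 := by
    have h1 : star v ⬝ᵥ (Cᴴ *ᵥ w) = 0 := by rw [hCw, dotProduct_zero]
    rw [dotProduct_mulVec, ← star_mulVec, ← hu, ← huAw, star_mulVec,
      ← dotProduct_mulVec] at h1
    exact h1
  have hAH : Aᴴ = H + (Complex.I * (s : ℂ)) • (1 : Matrix (Fin n) (Fin n) ℂ) := by
    rw [hA, conjTranspose_sub, hH.eq, conjTranspose_smul, conjTranspose_one]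
    simp [Complex.star_def, Complex.ext_iff, sub_eq_add_neg, neg_smul]
  have hw0 : w = 0 := by
    apply dtn_aux H hH (-s) (by simpa using hs.ne') w
    rw [hAH, add_mulVec, smul_mulVec, one_mulVec, dotProduct_add,
      dotProduct_smul, smul_eq_mul] at key
    have : star w ⬝ᵥ (H *ᵥ w) = -(Complex.I * (s : ℂ) * (star w ⬝ᵥ w)) := by
      linear_combination key
    rw [this]
    push_cast
    ring
  have hu0 : u = 0 := by rw [← huAw, hw0, mulVec_zero]
  have : C *ᵥ v = C *ᵥ 0 := by rw [← hu, hu0, mulVec_zero]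
  exact hC this
end

section
/- Let $\widetilde{H}$ be an invertible complex square matrix partitioned into 2×2 blocks over an index decomposition into parts $I$ (of size $n_I$) and $II$ (of size $n_{II}$), with inverse $\widetilde{G} = \widetilde{H}^{-1}$ partitioned conformally. Suppose the off-diagonal blocks are supported on boundary index sets: there are selection matrices $E_\Gamma$ ($n_\Gamma \times n_I$) and $E_\Sigma$ ($n_\Sigma \times n_{II}$), each consisting of distinct rows of the identity matrix (so $E_\Gamma E_\Gamma^T = I_{n_\Gamma}$ and $E_\Sigma E_\Sigma^T = I_{n_\Sigma}$), and matrices $H_{\Gamma,\Sigma}$ ($n_\Gamma \times n_\Sigma$) and $H_{\Sigma,\Gamma}$ ($n_\Sigma \times n_\Gamma$) such that $\widetilde{H}_{I,II} = E_\Gamma^T H_{\Gamma,\Sigma} E_\Sigma$ and $\widetilde{H}_{II,I} = E_\Sigma^T H_{\Sigma,\Gamma} E_\Gamma$. Define $\widetilde{G}_{\Sigma,\Gamma} = E_\Sigma \widetilde{G}_{II,I} E_\Gamma^T$ and $\widetilde{G}_{\Sigma,\Sigma} = E_\Sigma \widetilde{G}_{II,II} E_\Sigma^T$, and assume $\widetilde{H}_{II,II}$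 and $I_{n_\Gamma} - H_{\Gamma,\Sigma} \widetilde{G}_{\Sigma,\Gamma}$ are invertible. Then for any vector $\Phi_I \in \mathbb{C}^{n_I}$, setting $\Phi_{II} = -\widetilde{H}_{II,II}^{-1} \widetilde{H}_{II,I} \Phi_I$, $\Phi_\Gamma = E_\Gamma \Phi_I$, and $f_\Gamma = H_{\Gamma,\Sigma} E_\Sigma \Phi_{II}$, one has $f_\Gamma = -\big(I_{n_\Gamma} - H_{\Gamma,\Sigma} \widetilde{G}_{\Sigma,\Gamma}\big)^{-1} H_{\Gamma,\Sigma} \widetilde{G}_{\Sigma,\Sigma} H_{\Sigma,\Gamma} \Phi_\Gamma$. -/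
open Matrix

/-- Boundary-element evaluation of the discrete Dirichlet-to-Neumann map:
if the off-diagonal blocks of the invertible shifted Hamiltonian `H̃` are supported on
boundary layers `Γ` (selected from part `I` by `E_Γ`) and `Σ` (selected from part `II`
by `E_Σ`), then the Neumann data `f_Γ` is obtained from the Dirichlet data `Φ_Γ` using only
the small boundary blocks of the Green's function `G̃ = H̃⁻¹`:
`f_Γ = -(I - H_{Γ,Σ} G̃_{Σ,Γ})⁻¹ H_{Γ,Σ} G̃_{Σ,Σ} H_{Σ,Γ} Φ_Γ`. -/
theorem boundary_element_dtn_evaluation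
    (nI nII nΓ nSig : ℕ)
    (Ht : Matrix (Fin nI ⊕ Fin nII) (Fin nI ⊕ Fin nII) ℂ) (hHt : IsUnit Ht)
    (Gt : Matrix (Fin nI ⊕ Fin nII) (Fin nI ⊕ Fin nII) ℂ) (hGt : Gt = Ht⁻¹)
    (EΓ : Matrix (Fin nΓ) (Fin nI) ℂ)
    (hEΓ : ∃ g : Fin nΓ → Fin nI, Function.Injective g ∧
      EΓ = (1 : Matrix (Fin nI) (Fin nI) ℂ).submatrix g id)
    (ESig : Matrix (Fin nSig) (Fin nII) ℂ)
    (hESig : ∃ g : Fin nSig → Fin nII, Function.Injective g ∧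
      ESig = (1 : Matrix (Fin nII) (Fin nII) ℂ).submatrix g id)
    (HΓSig : Matrix (Fin nΓ) (Fin nSig) ℂ) (HSigΓ : Matrix (Fin nSig) (Fin nΓ) ℂ)
    (h12 : Ht.toBlocks₁₂ = EΓᵀ * HΓSig * ESig)
    (h21 : Ht.toBlocks₂₁ = ESigᵀ * HSigΓ * EΓ)
    (GSigΓ : Matrix (Fin nSig) (Fin nΓ) ℂ) (hGSigΓ : GSigΓ = ESig * Gt.toBlocks₂₁ * EΓᵀ)
    (GSigSig : Matrix (Fin nSig) (Fin nSig) ℂ) (hGSigSig : GSigSig = ESig * Gt.toBlocks₂₂ * ESigᵀ)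
    (h22 : IsUnit Ht.toBlocks₂₂)
    (hU : IsUnit ((1 : Matrix (Fin nΓ) (Fin nΓ) ℂ) - HΓSig * GSigΓ)) :
    ∀ ΦI : Fin nI → ℂ,
      ∀ (ΦII : Fin nII → ℂ) (ΦΓ : Fin nΓ → ℂ) (fΓ : Fin nΓ → ℂ),
        ΦII = -(Ht.toBlocks₂₂)⁻¹.mulVec ((Ht.toBlocks₂₁).mulVec ΦI) →
        ΦΓ = EΓ.mulVec ΦI →
        fΓ = HΓSig.mulVec (ESig.mulVec ΦII) →
        fΓ = -((((1 : Matrix (Fin nΓ) (Fin nΓ) ℂ) - HΓSig * GSigΓ)⁻¹ * HΓSig * GSigSig * HSigΓ).mulVec ΦΓ) := by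
  intro ΦI ΦII ΦΓ fΓ hΦII hΦΓ hfΓ
  set D := Ht.toBlocks₂₂ with hD
  have hGH : Gt * Ht = 1 := by
    rw [hGt]; exact Matrix.nonsing_inv_mul Ht ((Matrix.isUnit_iff_isUnit_det Ht).mp hHt)
  have hblock : Gt.toBlocks₂₁ * Ht.toBlocks₁₂ + Gt.toBlocks₂₂ * D = 1 := by
    have h := congrArg Matrix.toBlocks₂₂ hGH
    rw [← Matrix.fromBlocks_toBlocks Gt, ← Matrix.fromBlocks_toBlocks Ht,
      Matrix.fromBlocks_multiply] at h
    have h1 : (1 : Matrix (Fin nI ⊕ Fin nII) (Fin nI ⊕ Fin nII) ℂ).toBlocks₂₂ = 1 := by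
      ext i j
      simp [Matrix.toBlocks₂₂, Matrix.one_apply]
    simpa [Matrix.toBlocks_fromBlocks₂₂, h1] using h
  have hDdet : IsUnit D.det := (Matrix.isUnit_iff_isUnit_det D).mp h22
  have hDinv : D * D⁻¹ = 1 := Matrix.mul_nonsing_inv D hDdet
  have hG22 : Gt.toBlocks₂₂ = D⁻¹ - Gt.toBlocks₂₁ * Ht.toBlocks₁₂ * D⁻¹ := by
    have h := congrArg (· * D⁻¹) hblock
    simp only [add_mul, Matrix.mul_assoc, hDinv, Matrix.mul_one, Matrix.one_mul] at h
    rw [← Matrix.mul_assoc] at h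
    rw [eq_sub_iff_add_eq, add_comm]
    exact h
  set M : Matrix (Fin nSig) (Fin nSig) ℂ := ESig * D⁻¹ * ESigᵀ with hM
  have hkey : HΓSig * GSigSig = ((1 : Matrix (Fin nΓ) (Fin nΓ) ℂ) - HΓSig * GSigΓ) * (HΓSig * M) := by
    rw [hGSigSig, hGSigΓ, hG22, h12, hM]
    simp only [Matrix.mul_sub, Matrix.sub_mul, Matrix.one_mul, Matrix.mul_assoc]
  have hUdet : IsUnit ((1 : Matrix (Fin nΓ) (Fin nΓ) ℂ) - HΓSig * GSigΓ).det :=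
    (Matrix.isUnit_iff_isUnit_det _).mp hU
  have hkey2 : ((1 : Matrix (Fin nΓ) (Fin nΓ) ℂ) - HΓSig * GSigΓ)⁻¹ * (HΓSig * GSigSig) = HΓSig * M := by
    rw [hkey, ← Matrix.mul_assoc, Matrix.nonsing_inv_mul _ hUdet, Matrix.one_mul]
  have hmat : ((1 : Matrix (Fin nΓ) (Fin nΓ) ℂ) - HΓSig * GSigΓ)⁻¹ * HΓSig * GSigSig * HSigΓ
      = HΓSig * M * HSigΓ := by
    rw [Matrix.mul_assoc _ HΓSig GSigSig, hkey2]
  rw [hmat, hfΓ, hΦII, hΦΓ, h21, hM]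
  simp [Matrix.mulVec_mulVec, Matrix.mulVec_neg, Matrix.neg_mulVec, Matrix.mul_assoc]
end
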